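/- arXiv:2306.16128 — 2 statements merged into one kernel-verified Lean document; each statement's English description precedes it below -/
import Mathlib

section
/- Σ_{n=1}^{N} tan²(nπ/(2N+1)) = N(2N+1) for every natural number N ≥ 1. -/
/-!
Put `M = 2N + 1` and `ζ = exp (2πi / M)`. Then `tan² (nπ / M) = -((ζⁿ - 1) / (ζⁿ + 1))²`, and for
`z ^ M = 1` with `M` odd, `(1 + z) ∑_{k < M} (-z)ᵏ = 1 - (-z)ᴹ = 2` gives
`(z - 1) / (z + 1) = -∑_{k=1}^{M-1} (-z)ᵏ`. Squaring and summing over all `M`-th roots of unity,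
only the monomials `z^(k + l)` with `k + l = M` survive, so `∑_{n < M} tan² (nπ / M) = M² - M`.
As `tan (π - x) = -tan x`, the terms `n` and `M - n` agree, and the sum over `1 ≤ n ≤ N` is half
of that.
-/

open Real Finset

theorem IsPrimitiveRoot.sum_pow_pow_eq_ite {R : Type*} [CommRing R] [IsDomain R] {M : ℕ} {ζ : R}
    (hζ : IsPrimitiveRoot ζ M) (j : ℕ) :
    ∑ n ∈ range M, (ζ ^ n) ^ j = if M ∣ j then (M : R) else 0 := by
  simp_rw [← pow_mul, mul_comm _ j, pow_mul]
  have hroot : (ζ ^ j) ^ M = 1 := by rw [← pow_mul, mul_comm, pow_mul, hζ.pow_eq_one, one_pow]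
  split_ifs with hj
  · simp [(hζ.pow_eq_one_iff_dvd j).2 hj]
  · have hne : ζ ^ j ≠ 1 := mt (hζ.pow_eq_one_iff_dvd j).1 hj
    have h := geom_sum_mul (ζ ^ j) M
    rw [hroot, sub_self] at h
    exact (mul_eq_zero.1 h).resolve_right (sub_ne_zero.2 hne)

theorem sub_one_div_add_one_eq_neg_sum {K : Type*} [Field K] [CharZero K] {M : ℕ} (hM : Odd M)
    {z : K} (hz : z ^ M = 1) :
    (z - 1) / (z + 1) = -∑ k ∈ Ico 1 M, (-z) ^ k := by
  have hgeom : (∑ k ∈ range M, (-z) ^ k) * (z + 1) = 2 := by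
    have h := geom_sum_mul (-z) M
    rw [hM.neg_pow, hz] at h
    linear_combination -h
  have hz1 : z + 1 ≠ 0 := right_ne_zero_of_mul (hgeom ▸ two_ne_zero)
  rw [range_eq_Ico, sum_eq_sum_Ico_succ_bot hM.pos, pow_zero] at hgeom
  rw [div_eq_iff hz1]
  linear_combination hgeom

theorem IsPrimitiveRoot.sum_sub_one_div_add_one_sq {K : Type*} [Field K] [CharZero K] {M : ℕ}
    {ζ : K} (hζ : IsPrimitiveRoot ζ M) (hM : Odd M) :
    ∑ n ∈ range M, ((ζ ^ n - 1) / (ζ ^ n + 1)) ^ 2 = (M : K) - (M : K) ^ 2 := by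
  have hinner : ∀ k ∈ Ico 1 M,
      ∑ l ∈ Ico 1 M, (-1 : K) ^ (k + l) * (if M ∣ k + l then (M : K) else 0) = -M := by
    intro k hk
    rw [mem_Ico] at hk
    rw [sum_eq_single_of_mem (M - k) (by simp; omega), Nat.add_sub_cancel' hk.2.le,
      if_pos dvd_rfl, hM.neg_one_pow, neg_one_mul]
    intro l hl hlk
    rw [mem_Ico] at hl
    have hndvd : ¬ M ∣ k + l := fun hdvd =>
      hlk (by have := Nat.eq_of_dvd_of_lt_two_mul (by omega) hdvd (by omega); omega)
    rw [if_neg hndvd, mul_zero]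
  calc ∑ n ∈ range M, ((ζ ^ n - 1) / (ζ ^ n + 1)) ^ 2
      = ∑ n ∈ range M, ∑ k ∈ Ico 1 M, ∑ l ∈ Ico 1 M,
          (-1 : K) ^ (k + l) * (ζ ^ n) ^ (k + l) := by
        refine sum_congr rfl fun n _ => ?_
        have hroot : (ζ ^ n) ^ M = 1 := by
          rw [← pow_mul, mul_comm, pow_mul, hζ.pow_eq_one, one_pow]
        rw [sub_one_div_add_one_eq_neg_sum hM hroot, neg_sq, sq, sum_mul_sum]
        refine sum_congr rfl fun k _ => sum_congr rfl fun l _ => ?_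
        rw [neg_pow, neg_pow, pow_add, pow_add]
        ring
    _ = ∑ k ∈ Ico 1 M, ∑ l ∈ Ico 1 M,
          (-1 : K) ^ (k + l) * (if M ∣ k + l then (M : K) else 0) := by
        rw [sum_comm]
        refine sum_congr rfl fun k _ => ?_
        rw [sum_comm]
        simp_rw [← mul_sum, hζ.sum_pow_pow_eq_ite]
    _ = M - M ^ 2 := by
        rw [sum_congr rfl hinner, sum_const, Nat.card_Ico, nsmul_eq_mul, Nat.cast_sub hM.pos]
        ring

theorem Complex.tan_sq_eq_neg_sq_exp (z : ℂ) :
    tan z ^ 2 = -((exp (2 * I * z) - 1) / (exp (2 * I * z) + 1)) ^ 2 := by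
  rw [← cot_inv_eq_tan, cot_eq_exp_ratio, inv_div]
  ring_nf
  rw [I_sq]
  ring

theorem sum_range_tan_sq_nat_mul_pi_div {M : ℕ} (hM : Odd M) :
    ∑ n ∈ range M, tan (n * π / M) ^ 2 = (M : ℝ) ^ 2 - M := by
  have hζ := Complex.isPrimitiveRoot_exp M hM.pos.ne'
  have hexp : ∀ n : ℕ, Complex.exp (2 * Complex.I * (n * π / M))
      = Complex.exp (2 * π * Complex.I / M) ^ n := by
    intro n
    rw [← Complex.exp_nat_mul]
    ring_nf
  apply Complex.ofReal_injective
  push_cast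
  simp_rw [Complex.tan_sq_eq_neg_sq_exp, hexp, sum_neg_distrib,
    hζ.sum_sub_one_div_add_one_sq hM]
  ring

theorem sum_range_two_mul_add_one_eq_of_reflect {R : Type*} [AddCommMonoid R] (f : ℕ → R)
    (N : ℕ) (hf : ∀ n ∈ Icc 1 N, f (2 * N + 1 - n) = f n) :
    ∑ n ∈ range (2 * N + 1), f n = f 0 + 2 • ∑ n ∈ Icc 1 N, f n := by
  have hIcc : ∑ n ∈ Icc 1 N, f n = ∑ n ∈ range N, f (n + 1) := by
    rw [← Ico_add_one_right_eq_Icc, sum_Ico_eq_sum_range, Nat.add_sub_cancel]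
    simp_rw [add_comm 1]
  have hreflect : ∑ n ∈ range N, f (N + n + 1) = ∑ n ∈ range N, f (n + 1) := by
    rw [← sum_range_reflect]
    refine sum_congr rfl fun n hn => ?_
    rw [mem_range] at hn
    rw [← hf (n + 1) (by simp; omega)]
    congr 1
    omega
  rw [sum_range_succ', two_mul, sum_range_add, hreflect, hIcc, two_nsmul, add_comm]

theorem stmt_7_general (N : ℕ) :
    ∑ n ∈ Finset.Icc 1 N, Real.tan (n * π / (2 * N + 1)) ^ 2
      = N * (2 * N + 1) := by
  have h := sum_range_tan_sq_nat_mul_pi_div (odd_two_mul_add_one N)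
  rw [sum_range_two_mul_add_one_eq_of_reflect _ N] at h
  · push_cast at h
    rw [zero_mul, zero_div, tan_zero, nsmul_eq_mul] at h
    linear_combination h / 2
  · intro n hn
    rw [mem_Icc] at hn
    rw [Nat.cast_sub (by omega), sub_mul, sub_div, mul_div_cancel_left₀ π (by positivity),
      tan_pi_sub, neg_sq]

theorem stmt_7 (N : ℕ) (hN : 1 ≤ N) :
    ∑ n ∈ Finset.Icc 1 N, Real.tan (n * π / (2 * N + 1)) ^ 2
      = N * (2 * N + 1) :=
  stmt_7_general N
end

section
/- Let A(X) = √(1+X) and f_M its Padé-type approximant f_M(X) = 1 + (2/M) Σ_{n=1}^N c_n X/(1+c_n+X) with M = 2N+1, c_n = tan²(nπ/M). Then for every fixed X ≥ 0, f_M(X) ≤ √(1+X); i.e., the approximant underestimates the square root on [0,∞). -/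
/-!
Put `s = √(1 + X)` and `r = (1 - s) / (1 + s) ∈ (-1, 0]`. Then the `n`-th summand of `f_M` is
`s · P_r(2πn/M) - 1`, where `P_r(φ) = (1 - r²) / (1 - 2r cos φ + r²)` is the Poisson kernel
of the unit disc. Summing the Poisson kernel over the `M`-th roots of unity amounts to the
partial fraction identity `∑ₙ 1 / (1 - x ζⁿ) = M / (1 - xᴹ)`, which gives the closed form
`f_M(X) = s · (1 + rᴹ) / (1 - rᴹ)`. As `M` is odd and `r ≤ 0`, `rᴹ ≤ 0`, so `f_M(X) ≤ s`.
-/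

open Real Finset

theorem IsPrimitiveRoot.geom_sum_pow_eq_zero {K : Type*} [Field K] {ζ : K} {M k : ℕ}
    (hζ : IsPrimitiveRoot ζ M) (hk₀ : k ≠ 0) (hk : k < M) :
    ∑ n ∈ range M, (ζ ^ k) ^ n = 0 := by
  have hζk : (ζ ^ k) ^ M = 1 := by rw [← pow_mul, mul_comm, pow_mul, hζ.pow_eq_one, one_pow]
  rw [geom_sum_eq (hζ.pow_ne_one_of_pos_of_lt hk₀ hk), hζk, sub_self, zero_div]

theorem IsPrimitiveRoot.sum_inv_one_sub_mul_pow {K : Type*} [Field K] {ζ : K} {M : ℕ}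
    (hζ : IsPrimitiveRoot ζ M) {x : K} (hx : x ^ M ≠ 1) :
    ∑ n ∈ range M, (1 - x * ζ ^ n)⁻¹ = M / (1 - x ^ M) := by
  have hxM : 1 - x ^ M ≠ 0 := sub_ne_zero.2 hx.symm
  have hterm (n : ℕ) :
      (1 - x * ζ ^ n)⁻¹ = (∑ k ∈ range M, x ^ k * (ζ ^ k) ^ n) / (1 - x ^ M) := by
    have hpow : (x * ζ ^ n) ^ M = x ^ M := by
      rw [mul_pow, ← pow_mul, mul_comm n, pow_mul, hζ.pow_eq_one, one_pow, mul_one]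
    have hne : 1 - x * ζ ^ n ≠ 0 := fun h ↦ hx (by rw [← hpow, ← sub_eq_zero.1 h, one_pow])
    rw [eq_div_iff hxM, ← hpow, ← mul_neg_geom_sum, inv_mul_cancel_left₀ hne]
    exact sum_congr rfl fun k _ ↦ by ring
  rw [sum_congr rfl fun n _ ↦ hterm n, ← sum_div, sum_comm]
  congr 1
  simp_rw [← mul_sum]
  rw [sum_eq_single 0
    (fun k hk hk₀ ↦ by rw [hζ.geom_sum_pow_eq_zero hk₀ (mem_range.1 hk), mul_zero])
    (by simp +contextual)]
  simp

theorem IsPrimitiveRoot.sum_add_div_sub {K : Type*} [Field K] {ζ : K} {M : ℕ}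
    (hζ : IsPrimitiveRoot ζ M) {w : K} (hw : w ^ M ≠ 1) :
    ∑ n ∈ range M, (ζ ^ n + w) / (ζ ^ n - w) = M * (1 + w ^ M) / (1 - w ^ M) := by
  have hM : M ≠ 0 := by rintro rfl; exact hw (pow_zero w)
  have hterm (n : ℕ) : (ζ ^ n + w) / (ζ ^ n - w) = 2 * (1 - w * ζ⁻¹ ^ n)⁻¹ - 1 := by
    have hne : ζ ^ n - w ≠ 0 := fun h ↦ hw (by
      rw [← sub_eq_zero.1 h, ← pow_mul, mul_comm, pow_mul, hζ.pow_eq_one, one_pow])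
    have hζn : ζ ^ n ≠ 0 := pow_ne_zero n (hζ.ne_zero hM)
    rw [inv_pow]
    field_simp
    ring
  rw [sum_congr rfl fun n _ ↦ hterm n, sum_sub_distrib, ← mul_sum,
    hζ.inv.sum_inv_one_sub_mul_pow hw]
  field_simp
  simp
  ring

theorem sum_poissonKernel_pow_of_isPrimitiveRoot {ζ : ℂ} {M : ℕ} (hζ : IsPrimitiveRoot ζ M)
    {w : ℂ} (hw : w ^ M ≠ 1) :
    ∑ n ∈ range M, poissonKernel 0 w (ζ ^ n) = (M * (1 + w ^ M) / (1 - w ^ M)).re := by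
  simp_rw [poissonKernel_eq_re_herglotzRieszKernel, Function.comp_apply, ← Complex.re_sum,
    herglotzRieszKernel, sub_zero, hζ.sum_add_div_sub hw]

theorem poissonKernel_zero_ofReal_exp_mul_I (r φ : ℝ) :
    poissonKernel 0 r (Complex.exp (φ * Complex.I))
      = (1 - r ^ 2) / (1 - 2 * r * cos φ + r ^ 2) := by
  have hnorm : ‖Complex.exp (φ * Complex.I) - r‖ ^ 2 = 1 - 2 * r * cos φ + r ^ 2 := by
    rw [← Complex.normSq_eq_norm_sq, Complex.normSq_apply]
    simp only [Complex.sub_re, Complex.sub_im, Complex.ofReal_re, Complex.ofReal_im,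
      Complex.exp_ofReal_mul_I_re, Complex.exp_ofReal_mul_I_im]
    linear_combination sin_sq_add_cos_sq φ
  simp [poissonKernel_def, hnorm, Complex.norm_exp_ofReal_mul_I]

theorem sum_range_one_sub_sq_div {M : ℕ} {r : ℝ} (hr : r ^ M ≠ 1) :
    ∑ n ∈ range M, (1 - r ^ 2) / (1 - 2 * r * cos (2 * π * n / M) + r ^ 2)
      = M * (1 + r ^ M) / (1 - r ^ M) := by
  have hM : M ≠ 0 := by rintro rfl; exact hr (pow_zero r)
  have hζn (n : ℕ) : Complex.exp (2 * π * Complex.I / M) ^ n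
      = Complex.exp ((2 * π * n / M : ℝ) * Complex.I) := by
    rw [← Complex.exp_nat_mul]; push_cast; ring_nf
  have h := sum_poissonKernel_pow_of_isPrimitiveRoot (Complex.isPrimitiveRoot_exp M hM)
    (w := r) (by exact_mod_cast hr)
  simp_rw [hζn, poissonKernel_zero_ofReal_exp_mul_I] at h
  rw [h]
  exact_mod_cast Complex.ofReal_re _

theorem sum_range_eq_add_two_nsmul_sum_Icc_of_reflect {β : Type*} [AddCommMonoid β] {M N : ℕ}
    (hM : M = 2 * N + 1) (g : ℕ → β) (hg : ∀ n ∈ Icc 1 N, g (M - n) = g n) :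
    ∑ n ∈ range M, g n = g 0 + 2 • ∑ n ∈ Icc 1 N, g n := by
  subst hM
  have hIcc : ∑ n ∈ Icc 1 N, g n = ∑ n ∈ range N, g (n + 1) := by
    rw [← Finset.Ico_add_one_right_eq_Icc, sum_Ico_eq_sum_range]; simp [add_comm]
  have hreflect : ∑ n ∈ range N, g (N + n + 1) = ∑ n ∈ range N, g (n + 1) := by
    rw [← sum_range_reflect]
    refine sum_congr rfl fun n hn ↦ ?_
    have hn := mem_range.1 hn
    rw [← hg (n + 1) (mem_Icc.2 ⟨by omega, by omega⟩)]
    congr 1; omega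
  rw [sum_range_succ', two_mul, sum_range_add, hreflect, hIcc, two_nsmul, add_comm]

theorem sum_Icc_one_sub_sq_div_of_odd {M N : ℕ} (hM : M = 2 * N + 1) {r : ℝ}
    (hr : r ^ M ≠ 1) :
    (1 - r ^ 2) / (1 - 2 * r + r ^ 2)
        + 2 * ∑ n ∈ Icc 1 N, (1 - r ^ 2) / (1 - 2 * r * cos (2 * π * n / M) + r ^ 2)
      = M * (1 + r ^ M) / (1 - r ^ M) := by
  have hreflect (n : ℕ) (hn : n ∈ Icc 1 N) :
      cos (2 * π * ((M - n : ℕ) : ℝ) / M) = cos (2 * π * n / M) := by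
    have hnM : n ≤ M := by have := (mem_Icc.1 hn).2; omega
    have hM₀ : (M : ℝ) ≠ 0 := by rw [hM]; positivity
    rw [Nat.cast_sub hnM, show 2 * π * (M - n : ℝ) / M = 2 * π - 2 * π * n / M by field_simp,
      cos_two_pi_sub]
  rw [← sum_range_one_sub_sq_div hr, sum_range_eq_add_two_nsmul_sum_Icc_of_reflect hM _
    fun n hn ↦ by rw [hreflect n hn], nsmul_eq_mul]
  simp

/-- With `s = √(1 + X)` and `r = (1 - s) / (1 + s)`, the summand of `f_M` at the angle `θ` is a
value of the Poisson kernel of the unit disc at `2θ`. -/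
theorem tan_sq_mul_div_eq_poisson_sub_one {θ X s r : ℝ} (hθ : cos θ ≠ 0) (hs : 0 < s)
    (hsX : s ^ 2 = 1 + X) (hr : r * (1 + s) = 1 - s) :
    tan θ ^ 2 * X / (1 + tan θ ^ 2 + X)
      = s * ((1 - r ^ 2) / (1 - 2 * r * cos (2 * θ) + r ^ 2)) - 1 := by
  obtain rfl : r = (1 - s) / (1 + s) := by rw [← hr]; field_simp
  obtain rfl : X = s ^ 2 - 1 := by linarith
  have hsc := sin_sq_add_cos_sq θ
  have hpoisson : 1 - 2 * ((1 - s) / (1 + s)) * (2 * cos θ ^ 2 - 1) + ((1 - s) / (1 + s)) ^ 2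
      = 4 * (sin θ ^ 2 + s ^ 2 * cos θ ^ 2) / (1 + s) ^ 2 := by
    field_simp
    linear_combination (-4 : ℝ) * hsc
  have hdenom : 1 + (sin θ / cos θ) ^ 2 + (s ^ 2 - 1)
      = (sin θ ^ 2 + s ^ 2 * cos θ ^ 2) / cos θ ^ 2 := by
    field_simp
    ring
  rw [tan_eq_sin_div_cos, cos_two_mul, hpoisson, hdenom]
  field_simp
  linear_combination (4 * s ^ 2) * hsc

theorem cos_mul_pi_div_pos {n M : ℕ} (h : 2 * n < M) : 0 < cos (n * π / M) := by
  have hM : (0 : ℝ) < M := by exact_mod_cast (by omega : 0 < M)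
  have h' : (2 * n : ℝ) < M := by exact_mod_cast h
  refine cos_pos_of_mem_Ioo ⟨by linarith [pi_pos, show 0 ≤ n * π / M by positivity], ?_⟩
  rw [div_lt_iff₀ hM]
  nlinarith [pi_pos]

theorem stmt_13_general (N : ℕ) (M : ℕ) (hM : M = 2 * N + 1)
    (c : ℕ → ℝ) (hc : ∀ n, c n = Real.tan (n * π / M) ^ 2)
    (f : ℝ → ℝ)
    (hf : ∀ X : ℝ, f X = 1 + (2 / M) * ∑ n ∈ Finset.Icc 1 N,
      c n * X / (1 + c n + X)) :
    ∀ X : ℝ, 0 ≤ X → f X ≤ Real.sqrt (1 + X) := by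
  intro X hX
  set s := √(1 + X)
  set r := (1 - s) / (1 + s)
  have hs : 1 ≤ s := one_le_sqrt.2 (by linarith)
  have hsX : s ^ 2 = 1 + X := sq_sqrt (by linarith)
  have hr : r * (1 + s) = 1 - s := div_mul_cancel₀ _ (by linarith)
  have hrM : r ^ M ≤ 0 := (hM ▸ odd_two_mul_add_one N).pow_nonpos
    (div_nonpos_of_nonpos_of_nonneg (by linarith) (by linarith))
  have hMN : (M : ℝ) = 2 * N + 1 := by rw [hM]; push_cast; ring
  have hterm (n : ℕ) (hn : n ∈ Icc 1 N) : c n * X / (1 + c n + X)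
      = s * ((1 - r ^ 2) / (1 - 2 * r * cos (2 * π * n / M) + r ^ 2)) - 1 := by
    have hcos := cos_mul_pi_div_pos (n := n) (M := M) (by have := (mem_Icc.1 hn).2; omega)
    rw [hc, tan_sq_mul_div_eq_poisson_sub_one hcos.ne' (by linarith) hsX hr,
      show 2 * (n * π / M) = 2 * π * n / M by ring]
  have hterm₀ : s * ((1 - r ^ 2) / (1 - 2 * r + r ^ 2)) = 1 := by
    have h := tan_sq_mul_div_eq_poisson_sub_one (θ := 0) (by simp) (by linarith) hsX hr
    norm_num at h
    linarith
  have hsum := sum_Icc_one_sub_sq_div_of_odd hM (r := r) (by linarith)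
  have hrM' : 0 < 1 - r ^ M := by linarith
  clear_value r s
  calc f X = 1 + 2 / M * (s * ∑ n ∈ Icc 1 N,
        (1 - r ^ 2) / (1 - 2 * r * cos (2 * π * n / M) + r ^ 2) - N) := by
        rw [hf, sum_congr rfl hterm, sum_sub_distrib, ← mul_sum]; simp
    _ = s * ((1 + r ^ M) / (1 - r ^ M)) := by
        rw [eq_div_iff hrM'.ne'] at hsum
        have hM₀ : (M : ℝ) ≠ 0 := by rw [hMN]; positivity
        field_simp
        linear_combination s * hsum - (1 - r ^ M) * hterm₀ + (1 - r ^ M) * hMN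
    _ ≤ s := mul_le_of_le_one_right (by linarith) ((div_le_one hrM').2 (by linarith))

theorem stmt_13 (N : ℕ) (hN : 1 ≤ N) (M : ℕ) (hM : M = 2 * N + 1)
    (c : ℕ → ℝ) (hc : ∀ n, c n = Real.tan (n * π / M) ^ 2)
    (f : ℝ → ℝ)
    (hf : ∀ X : ℝ, f X = 1 + (2 / M) * ∑ n ∈ Finset.Icc 1 N,
      c n * X / (1 + c n + X)) :
    ∀ X : ℝ, 0 ≤ X → f X ≤ Real.sqrt (1 + X) :=
  stmt_13_general N M hM c hc f hf
end
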